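/- arXiv:2602.21577 — 2 statements merged into one kernel-verified Lean document; each statement's English description precedes it below -/
import Mathlib

section
/- Let k ≥ 1 and let s, t, q, n be integers with t ≥ k + 1, q ≥ 3, 0 ≤ s ≤ t - 1, and n ≥ kq + s + t. Then (t - k - 1)·n + (k²(q² - q + 1) - t(t + 2k - 1) + 5k)/2 + 5 - q - (t - k)·s > 0. -/
/-!
Write `a = t - k - 1 ≥ 0`. The left-hand side is increasing in `n` and, once `n = kq + s + t`,
decreasing in `s`, so it is smallest at `n = kq + s + t`, `s = t - 1`. There it equals
`(a² + a (2k(q - 1) - 1) + k²(q - 2)(q + 1) + 10 - 2q) / 2`, which is positive because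
`k²(q - 2)(q + 1) + 10 - 2q ≥ q² - 3q + 8 > 0`.
-/

section LinearOrderedField

variable {K : Type*} [Field K] [LinearOrder K] [IsStrictOrderedRing K]

lemma bound_expr_eq (k s t q n : K) :
    (t - k - 1) * n + (k ^ 2 * (q ^ 2 - q + 1) - t * (t + 2 * k - 1) + 5 * k) / 2
        + 5 - q - (t - k) * s =
      (t - k - 1) * (n - (k * q + s + t)) + (t - 1 - s)
        + ((t - k - 1) ^ 2 + (t - k - 1) * (2 * k * (q - 1) - 1)
          + k ^ 2 * ((q - 2) * (q + 1)) + 10 - 2 * q) / 2 := by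
  ring

lemma extremal_value_pos (k q a : K) (hk : 1 ≤ k) (hq : 3 ≤ q) (ha : 0 ≤ a) :
    0 < a ^ 2 + a * (2 * k * (q - 1) - 1) + k ^ 2 * ((q - 2) * (q + 1)) + 10 - 2 * q := by
  have hlin : 0 ≤ a * (2 * k * (q - 1) - 1) := mul_nonneg ha (by nlinarith)
  have hquad : (q - 2) * (q + 1) ≤ k ^ 2 * ((q - 2) * (q + 1)) :=
    le_mul_of_one_le_left (by nlinarith) (by nlinarith)
  have hq8 : 0 < (q - 2) * (q + 1) + 10 - 2 * q := by nlinarith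
  nlinarith [sq_nonneg a]

theorem bound_expr_pos {k s t q n : K} (hk : 1 ≤ k) (ht : k + 1 ≤ t) (hq : 3 ≤ q)
    (hst : s ≤ t - 1) (hn : k * q + s + t ≤ n) :
    0 < (t - k - 1) * n + (k ^ 2 * (q ^ 2 - q + 1) - t * (t + 2 * k - 1) + 5 * k) / 2
        + 5 - q - (t - k) * s := by
  rw [bound_expr_eq]
  have hn' : 0 ≤ (t - k - 1) * (n - (k * q + s + t)) :=
    mul_nonneg (by linarith) (by linarith)
  have hext := extremal_value_pos k q (t - k - 1) hk hq (by linarith)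
  linarith

end LinearOrderedField

theorem stmt_3_general (k s t q n : ℤ) (hk : 1 ≤ k) (ht : k + 1 ≤ t) (hq : 3 ≤ q)
    (hst : s ≤ t - 1) (hn : k * q + s + t ≤ n) :
    ((t : ℚ) - k - 1) * n + ((k : ℚ) ^ 2 * (q ^ 2 - q + 1) - t * (t + 2 * k - 1) + 5 * k) / 2
      + 5 - q - (t - k) * s > 0 :=
  bound_expr_pos (K := ℚ) (by exact_mod_cast hk) (by exact_mod_cast ht) (by exact_mod_cast hq)
    (by exact_mod_cast hst) (by exact_mod_cast hn)

theorem stmt_3 (k s t q n : ℤ) (hk : 1 ≤ k) (ht : k + 1 ≤ t) (hq : 3 ≤ q)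
    (hs0 : 0 ≤ s) (hst : s ≤ t - 1) (hn : k * q + s + t ≤ n) :
    ((t : ℚ) - k - 1) * n + ((k : ℚ) ^ 2 * (q ^ 2 - q + 1) - t * (t + 2 * k - 1) + 5 * k) / 2
      + 5 - q - (t - k) * s > 0 :=
  stmt_3_general k s t q n hk ht hq hst hn
end

section
/- Let G be a graph on n vertices with m edges and minimum degree δ ≥ 1. Then ρ(G) ≤ (δ-1)/2 + sqrt(2m - nδ + (δ+1)²/4), where ρ(G) is the adjacency spectral radius. -/
/-!
Let `x ≥ 0` be a Perron vector of the adjacency matrix, `A x = ρ x`, with maximal entry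
`x u`, and let `S = ∑ x`. Summing `A x = ρ x` gives `ρ S = ∑ d(v) x v ≤ (2m - nδ) x u + δ S`
(in particular `ρ ≥ δ`), while `S ≥ x u + ∑_{v ∼ u} x v = (1 + ρ) x u`. Hence
`(ρ - δ)(ρ + 1) x u ≤ (ρ - δ) S ≤ (2m - nδ) x u`, and solving this quadratic inequality for
`ρ` gives the bound.
-/

/-- The adjacency spectral radius of a finite simple graph: the supremum of the
(real) spectrum of its adjacency matrix. -/
noncomputable def adjSpectralRadius {V : Type*} [Fintype V] [DecidableEq V]
    (G : SimpleGraph V) [DecidableRel G.Adj] : ℝ :=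
  sSup (spectrum ℝ (G.adjMatrix ℝ))

open Finset Matrix

namespace Matrix

variable {n : Type*} [Fintype n] {A : Matrix n n ℝ}

theorem dotProduct_mulVec_le_abs_dotProduct_mulVec_abs (hA : ∀ i j, 0 ≤ A i j) (x : n → ℝ) :
    x ⬝ᵥ A *ᵥ x ≤ |x| ⬝ᵥ A *ᵥ |x| := by
  simp only [dotProduct, mulVec, mul_sum, Pi.abs_apply]
  refine sum_le_sum fun i _ => sum_le_sum fun j _ => ?_
  calc x i * (A i j * x j) ≤ |x i * (A i j * x j)| := le_abs_self _
    _ = |x i| * (A i j * |x j|) := by rw [abs_mul, abs_mul, abs_of_nonneg (hA i j)]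

variable [DecidableEq n]

theorem IsHermitian.sSup_spectrum_mem [Nonempty n] (hA : A.IsHermitian) :
    sSup (spectrum ℝ A) ∈ spectrum ℝ A := by
  rw [hA.spectrum_real_eq_range_eigenvalues]
  exact (Set.range_nonempty _).csSup_mem (Set.finite_range _)

theorem IsHermitian.posSemidef_sSup_spectrum_smul_one_sub (hA : A.IsHermitian) :
    (sSup (spectrum ℝ A) • 1 - A).PosSemidef := by
  refine posSemidef_iff_isHermitian_and_spectrum_nonneg.mpr
    ⟨(isHermitian_one.smul (IsSelfAdjoint.all _)).sub hA, ?_⟩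
  rw [← Algebra.algebraMap_eq_smul_one, ← spectrum.singleton_sub_eq]
  rintro _ ⟨_, rfl, μ, hμ, rfl⟩
  exact sub_nonneg.mpr (le_csSup finite_real_spectrum.bddAbove hμ)

theorem dotProduct_smul_one_sub_mulVec (ρ : ℝ) (x : n → ℝ) :
    x ⬝ᵥ (ρ • 1 - A) *ᵥ x = ρ * (x ⬝ᵥ x) - x ⬝ᵥ A *ᵥ x := by
  rw [sub_mulVec, smul_mulVec, one_mulVec, dotProduct_sub, dotProduct_smul, smul_eq_mul]

theorem IsHermitian.exists_pos_mulVec_eq_sSup_spectrum_smul [Nonempty n] (hA : A.IsHermitian)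
    (hA0 : ∀ i j, 0 ≤ A i j) :
    ∃ y : n → ℝ, 0 < y ∧ A *ᵥ y = sSup (spectrum ℝ A) • y := by
  set ρ := sSup (spectrum ℝ A)
  obtain ⟨x, hx, hx0⟩ := (Module.End.hasEigenvalue_iff_mem_spectrum (f := toLin' A).mpr
    (by rw [spectrum_toLin']; exact hA.sSup_spectrum_mem)).exists_hasEigenvector
  have hAx : A *ᵥ x = ρ • x := by simpa using Module.End.mem_eigenspace_iff.mp hx
  have hB := hA.posSemidef_sSup_spectrum_smul_one_sub
  have hnorm : |x| ⬝ᵥ |x| = x ⬝ᵥ x := by simp [dotProduct, abs_mul_abs_self]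
  -- `|x|` attains the Rayleigh bound `ρ ‖·‖²`, so it lies in the kernel of `ρ • 1 - A`.
  have hzero : |x| ⬝ᵥ (ρ • 1 - A) *ᵥ |x| = 0 := by
    refine le_antisymm ?_ (by simpa using hB.dotProduct_mulVec_nonneg |x|)
    have := dotProduct_mulVec_le_abs_dotProduct_mulVec_abs hA0 x
    rw [hAx, dotProduct_smul, smul_eq_mul] at this
    rw [dotProduct_smul_one_sub_mulVec, hnorm]
    linarith
  refine ⟨|x|, (abs_nonneg x).lt_of_ne fun h =>
    hx0 (funext fun i => abs_eq_zero.mp (congrFun h.symm i)), ?_⟩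
  have := (hB.dotProduct_mulVec_zero_iff |x|).mp (by simpa using hzero)
  rwa [sub_mulVec, smul_mulVec, one_mulVec, sub_eq_zero, eq_comm] at this

end Matrix

namespace SimpleGraph

variable {V : Type*} [Fintype V] (G : SimpleGraph V) [DecidableRel G.Adj]

theorem sum_adjMatrix_mulVec (x : V → ℝ) :
    ∑ v, (G.adjMatrix ℝ *ᵥ x) v = ∑ v, (G.degree v : ℝ) * x v := by
  simpa [dotProduct] using dotProduct_mulVec (1 : V → ℝ) (G.adjMatrix ℝ) x

theorem apply_add_adjMatrix_mulVec_apply_le_sum {x : V → ℝ} (hx : 0 ≤ x) (u : V) :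
    x u + (G.adjMatrix ℝ *ᵥ x) u ≤ ∑ v, x v := by
  classical
  rw [adjMatrix_mulVec_apply, ← sum_insert (G.notMem_neighborFinset_self u)]
  exact sum_le_sum_of_subset_of_nonneg (subset_univ _) fun v _ _ => hx v

theorem sum_degree_mul_le {x : V → ℝ} {c : ℝ} (hc : ∀ v, x v ≤ c) :
    ∑ v, (G.degree v : ℝ) * x v ≤
      (2 * #G.edgeFinset - Fintype.card V * G.minDegree) * c + G.minDegree * ∑ v, x v := by
  have hdeg (v : V) : (G.minDegree : ℝ) ≤ G.degree v := by
    exact_mod_cast G.minDegree_le_degree v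
  calc ∑ v, (G.degree v : ℝ) * x v
      ≤ ∑ v, (((G.degree v : ℝ) - G.minDegree) * c + G.minDegree * x v) :=
        sum_le_sum fun v _ => by
          nlinarith [mul_le_mul_of_nonneg_left (hc v) (sub_nonneg.mpr (hdeg v))]
    _ = (2 * #G.edgeFinset - Fintype.card V * G.minDegree) * c + G.minDegree * ∑ v, x v := by
        rw [sum_add_distrib, ← sum_mul, ← mul_sum, sum_sub_distrib, ← Nat.cast_sum,
          sum_degrees_eq_twice_card_edges]
        simp

variable {G}

theorem mul_sum_eq_sum_degree_mul {ρ : ℝ} {x : V → ℝ} (hAx : G.adjMatrix ℝ *ᵥ x = ρ • x) :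
    ρ * ∑ v, x v = ∑ v, (G.degree v : ℝ) * x v := by
  rw [← G.sum_adjMatrix_mulVec, hAx, mul_sum]
  rfl

theorem minDegree_le_of_adjMatrix_mulVec_eq_smul {ρ : ℝ} {x : V → ℝ} (hx : 0 < x)
    (hAx : G.adjMatrix ℝ *ᵥ x = ρ • x) : (G.minDegree : ℝ) ≤ ρ := by
  have hsum : 0 < ∑ v, x v := by
    obtain ⟨hx0, u, hu⟩ := Pi.lt_def.mp hx
    exact sum_pos' (fun v _ => hx0 v) ⟨u, mem_univ u, hu⟩
  have hδ : (G.minDegree : ℝ) * ∑ v, x v ≤ ∑ v, (G.degree v : ℝ) * x v := by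
    rw [mul_sum]
    exact sum_le_sum fun v _ => mul_le_mul_of_nonneg_right
      (by exact_mod_cast G.minDegree_le_degree v) (hx.le v)
  exact le_of_mul_le_mul_right (mul_sum_eq_sum_degree_mul hAx ▸ hδ) hsum

theorem sub_minDegree_mul_add_one_le {ρ : ℝ} {x : V → ℝ} (hx : 0 < x)
    (hAx : G.adjMatrix ℝ *ᵥ x = ρ • x) :
    (ρ - G.minDegree) * (ρ + 1) ≤ 2 * #G.edgeFinset - Fintype.card V * G.minDegree := by
  obtain ⟨-, v, hxv⟩ := Pi.lt_def.mp hx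
  obtain ⟨u, -, hu⟩ := exists_max_image univ x ⟨v, mem_univ v⟩
  have hxu : 0 < x u := hxv.trans_le (hu v (mem_univ v))
  have hρδ := minDegree_le_of_adjMatrix_mulVec_eq_smul hx hAx
  have hdeg := G.sum_degree_mul_le fun w => hu w (mem_univ w)
  have hnbr := G.apply_add_adjMatrix_mulVec_apply_le_sum hx.le u
  rw [hAx, Pi.smul_apply, smul_eq_mul] at hnbr
  rw [← mul_sum_eq_sum_degree_mul hAx] at hdeg
  refine le_of_mul_le_mul_right ?_ hxu
  calc (ρ - G.minDegree) * (ρ + 1) * x u = (ρ - G.minDegree) * (x u + ρ * x u) := by ring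
    _ ≤ (ρ - G.minDegree) * ∑ v, x v := mul_le_mul_of_nonneg_left hnbr (sub_nonneg.mpr hρδ)
    _ ≤ (2 * #G.edgeFinset - Fintype.card V * G.minDegree) * x u := by linarith

end SimpleGraph

theorem stmt_16_general {V : Type*} [Fintype V] [DecidableEq V] [Nonempty V]
    (G : SimpleGraph V) [DecidableRel G.Adj] :
    adjSpectralRadius G ≤ ((G.minDegree : ℝ) - 1) / 2 +
      Real.sqrt (2 * G.edgeFinset.card - (Fintype.card V) * G.minDegree
        + ((G.minDegree : ℝ) + 1) ^ 2 / 4) := by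
  obtain ⟨x, hx, hAx⟩ := (G.isHermitian_adjMatrix ℝ).exists_pos_mulVec_eq_sSup_spectrum_smul
    fun i j => by rw [G.adjMatrix_apply]; positivity
  set ρ := adjSpectralRadius G
  set δ : ℝ := (G.minDegree : ℝ)
  have hkey : (ρ - δ) * (ρ + 1) ≤ 2 * #G.edgeFinset - Fintype.card V * δ :=
    G.sub_minDegree_mul_add_one_le hx hAx
  have hsq :
      (ρ - (δ - 1) / 2) ^ 2 ≤ 2 * #G.edgeFinset - Fintype.card V * δ + (δ + 1) ^ 2 / 4 := by
    linarith
  linarith [le_abs_self (ρ - (δ - 1) / 2), Real.abs_le_sqrt hsq]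

theorem stmt_16 {V : Type*} [Fintype V] [DecidableEq V] [Nonempty V]
    (G : SimpleGraph V) [DecidableRel G.Adj] (hδ : 1 ≤ G.minDegree) :
    adjSpectralRadius G ≤ ((G.minDegree : ℝ) - 1) / 2 +
      Real.sqrt (2 * G.edgeFinset.card - (Fintype.card V) * G.minDegree
        + ((G.minDegree : ℝ) + 1) ^ 2 / 4) :=
  stmt_16_general G
end
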